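/- arXiv:math-ph/0409061 — 2 statements merged into one kernel-verified Lean document; each statement's English description precedes it below -/
import Mathlib

section
/- For β > 1 the equation m = tanh(β m) has exactly three solutions in ℝ: 0, m*(β), and -m*(β), where m*(β) > 0; for 0 < β ≤ 1 the only solution is m = 0. -/
/-!
Write `f m = tanh (β m)`. It is odd, so its fixed points are `0` and `± m` for the positive
fixed points `m`; it is strictly concave on `[0, ∞)` with `f 0 = 0` and `f' 0 = β`. For a strictly
concave `f` with `f 0 = 0` the secant slope `f x / x` is strictly decreasing on `(0, ∞)` and below
`f' 0`, so there is at most one positive fixed point, and none when `f' 0 ≤ 1`. When `f' 0 = β > 1`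
one exists by the intermediate value theorem, since `f x > x` for small `x > 0` and `f 1 < 1`.
-/

open Real Set Function

namespace Real

lemma hasDerivAt_tanh (x : ℝ) : HasDerivAt tanh (cosh x ^ 2)⁻¹ x := by
  rw [show tanh = fun y => sinh y / cosh y from funext tanh_eq_sinh_div_cosh]
  refine ((hasDerivAt_sinh x).div (hasDerivAt_cosh x) (cosh_pos x).ne').congr_deriv ?_
  rw [← sq, ← sq, cosh_sq_sub_sinh_sq, one_div]

lemma differentiable_tanh : Differentiable ℝ tanh :=
  fun x => (hasDerivAt_tanh x).differentiableAt

lemma strictConcaveOn_tanh : StrictConcaveOn ℝ (Ici 0) tanh := by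
  refine StrictAntiOn.strictConcaveOn_of_deriv (convex_Ici 0)
    differentiable_tanh.continuous.continuousOn ?_
  rw [interior_Ici, funext fun x => (hasDerivAt_tanh x).deriv]
  intro x hx y hy hxy
  have hcosh : cosh x < cosh y := cosh_lt_cosh.2 (by rwa [abs_of_pos hx, abs_of_pos hy])
  have := cosh_pos x
  dsimp only
  gcongr

lemma odd_tanh : Function.Odd tanh := tanh_neg

end Real

lemma StrictConcaveOn.comp_const_mul_Ici {f : ℝ → ℝ} (hf : StrictConcaveOn ℝ (Ici 0) f) {c : ℝ}
    (hc : 0 < c) : StrictConcaveOn ℝ (Ici 0) (fun x => f (c * x)) := by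
  refine ⟨convex_Ici 0, fun x hx y hy hxy a b ha hb hab => ?_⟩
  have := hf.2 (mul_nonneg hc.le hx) (mul_nonneg hc.le hy) (by simpa [hc.ne'] using hxy) ha hb hab
  simp only [smul_eq_mul] at this ⊢
  convert this using 2
  ring

lemma StrictConcaveOn.eq_of_isFixedPt {𝕜 : Type*} [Field 𝕜] [LinearOrder 𝕜]
    [IsStrictOrderedRing 𝕜] {f : 𝕜 → 𝕜} (hf : StrictConcaveOn 𝕜 (Ici 0) f) (h0 : f 0 = 0)
    {a b : 𝕜} (ha : 0 < a) (hb : 0 < b) (hfa : IsFixedPt f a) (hfb : IsFixedPt f b) : a = b := by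
  by_contra hab
  wlog hlt : a < b generalizing a b
  · exact this hb ha hfb hfa (Ne.symm hab) (lt_of_le_of_ne (not_lt.1 hlt) (Ne.symm hab))
  have := hf.secant_strict_mono self_mem_Ici ha.le hb.le ha.ne' hb.ne' hlt
  rw [h0, hfa.eq, hfb.eq, sub_zero, sub_zero, div_self hb.ne', div_self ha.ne'] at this
  exact lt_irrefl _ this

lemma StrictConcaveOn.lt_self_of_hasDerivAt_zero {f : ℝ → ℝ} (hf : StrictConcaveOn ℝ (Ici 0) f)
    (h0 : f 0 = 0) {d : ℝ} (hd : HasDerivAt f d 0) (hd1 : d ≤ 1) {x : ℝ} (hx : 0 < x) :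
    f x < x := by
  have := hf.slope_lt_of_hasDerivAt self_mem_Ici hx.le hx hd
  rw [slope_def_field, h0, sub_zero, sub_zero, div_lt_iff₀ hx] at this
  exact this.trans_le (mul_le_of_le_one_left hx.le hd1)

lemma exists_pos_isFixedPt_of_one_lt_deriv {f : ℝ → ℝ} (hf : Continuous f) (h0 : f 0 = 0)
    {d : ℝ} (hd : HasDerivAt f d 0) (hd1 : 1 < d) {b : ℝ} (hb : 0 < b) (hfb : f b ≤ b) :
    ∃ m, 0 < m ∧ IsFixedPt f m := by
  obtain ⟨a, hslope, ha⟩ :=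
    ((hd.tendsto_slope_zero_right.eventually (lt_mem_nhds hd1)).and (Ioo_mem_nhdsGT hb)).exists
  have hfa : a < f a := by
    rw [zero_add, h0, sub_zero, smul_eq_mul, lt_inv_mul_iff₀ ha.1, mul_one] at hslope
    exact hslope
  obtain ⟨m, hm, hfm⟩ := intermediate_value_Icc' ha.2.le (hf.sub continuous_id).continuousOn
    (show (0 : ℝ) ∈ Icc (f b - b) (f a - a) from ⟨by linarith, by linarith⟩)
  exact ⟨m, ha.1.trans_le hm.1, sub_eq_zero.1 hfm⟩

lemma Function.Odd.isFixedPt_neg_iff {α : Type*} [InvolutiveNeg α] {f : α → α} (hf : f.Odd)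
    {x : α} : IsFixedPt f (-x) ↔ IsFixedPt f x := by
  rw [IsFixedPt, hf x, neg_inj, IsFixedPt]

lemma Function.Odd.fixedPoints_eq {α : Type*} [AddCommGroup α] [LinearOrder α]
    [IsOrderedAddMonoid α] {f : α → α} (hf : f.Odd) :
    fixedPoints f = insert 0 ((Ioi 0 ∩ fixedPoints f) ∪ -(Ioi 0 ∩ fixedPoints f)) := by
  ext x
  simp only [mem_insert_iff, mem_union, mem_inter_iff, Set.mem_neg, mem_Ioi, mem_fixedPoints,
    hf.isFixedPt_neg_iff]
  rcases lt_trichotomy x 0 with hx | rfl | hx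
  · simp [hx, hx.not_gt, hx.ne]
  · simp [IsFixedPt, hf.map_zero]
  · simp [hx, hx.ne']

/-- The Curie–Weiss fixed point equation `m = tanh(β m)`: for `β > 1` there are exactly
three solutions `0, m*(β), -m*(β)` with `m*(β) > 0`; for `0 < β ≤ 1` only `m = 0`. -/
theorem curieWeiss_fixed_points (β : ℝ) (hβ : 0 < β) :
    (1 < β → ∃ ms : ℝ, 0 < ms ∧
      {m : ℝ | m = Real.tanh (β * m)} = {0, ms, -ms}) ∧
    (β ≤ 1 → {m : ℝ | m = Real.tanh (β * m)} = {0}) := by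
  set f : ℝ → ℝ := fun m => tanh (β * m)
  have hset : {m : ℝ | m = tanh (β * m)} = fixedPoints f := ext fun _ => eq_comm
  have hodd : f.Odd := odd_tanh.comp_odd fun m => mul_neg β m
  have hconc : StrictConcaveOn ℝ (Ici 0) f := strictConcaveOn_tanh.comp_const_mul_Ici hβ
  have h0 : f 0 = 0 := hodd.map_zero
  have hd : HasDerivAt f β 0 :=
    ((hasDerivAt_tanh (β * 0)).comp 0 ((hasDerivAt_id 0).const_mul β)).congr_deriv (by simp)
  rw [hset, hodd.fixedPoints_eq]
  constructor
  · intro hβ1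
    obtain ⟨ms, hms, hfix⟩ := exists_pos_isFixedPt_of_one_lt_deriv
      (differentiable_tanh.continuous.comp (continuous_const_mul β)) h0 hd hβ1 one_pos
      (tanh_lt_one _).le
    have hpos : Ioi 0 ∩ fixedPoints f = {ms} := eq_singleton_iff_unique_mem.2
      ⟨⟨hms, hfix⟩, fun m hm => hconc.eq_of_isFixedPt h0 hm.1 hms hm.2 hfix⟩
    exact ⟨ms, hms, by rw [hpos, neg_singleton, singleton_union]⟩
  · intro hβ1
    have hpos : Ioi 0 ∩ fixedPoints f = ∅ := eq_empty_of_forall_notMem fun m hm =>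
      (hconc.lt_self_of_hasDerivAt_zero h0 hd hβ1 hm.1).ne hm.2
    rw [hpos, neg_empty, union_empty, insert_empty_eq]
end

section
/- Let λ, λ' with 0 ≤ λ' ≤ λ < 1/(2d) and a₀, a₀' > 0 with λ(1+a₀)2d < 1. Then the entrywise product bound holds: Σ_{y ∈ ℤ^d∖V₀} ((I-λ∂)(I-λ(1+a₀)∂)⁻¹(I-λ∂)⁻¹)_{x,y} ≤ C e^{-c·dist(x, ℤ^d∖V₀)} for constants C, c > 0 depending only on d, λ, a₀, uniformly in the finite set V₀ and x ∈ V₀. -/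
/-!
Since `2d·λ(1+a₀) < 1`, both resolvents are convergent Neumann series, and because `∂ⁿ`
vanishes between points at distance `> n`, their entries decay like `r ^ dist`.
Exponential decay of kernels survives matrix products: splitting
`r ^ (|x-w| + |w-y|) ≤ √r ^ |x-y| · √r ^ |x-w|` keeps one factor summable in `w`.
The finite-range operator `I - λ∂` decays trivially, so the whole kernel does; summing its
decay over `y ∉ V₀` splits the exponent in half once more.
-/

/-- The lattice `ℤ^d`. -/
abbrev Zd (d : ℕ) := Fin d → ℤ

/-- Nearest-neighbor adjacency matrix of `ℤ^d`. -/
noncomputable def adj {d : ℕ} (x y : Zd d) : ℝ :=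
  if (∑ i, (x i - y i).natAbs) = 1 then 1 else 0

/-- Matrix powers of the adjacency matrix (entrywise, via `tsum`). -/
noncomputable def adjPow (d : ℕ) : ℕ → Zd d → Zd d → ℝ
  | 0 => fun x y => if x = y then 1 else 0
  | n + 1 => fun x y => ∑' z : Zd d, adj x z * adjPow d n z y

/-- The resolvent `(I - λ∂)⁻¹` via its Neumann series, entrywise. -/
noncomputable def res (d : ℕ) (lam : ℝ) (x y : Zd d) : ℝ :=
  ∑' n : ℕ, lam ^ n * adjPow d n x y

/-- The `ℓ¹` (graph) distance on `ℤ^d`. -/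
def dist1 {d : ℕ} (x y : Zd d) : ℕ := ∑ i, (x i - y i).natAbs

open Finset

lemma dist1_self {d : ℕ} (x : Zd d) : dist1 x x = 0 := by
  simp [dist1]

lemma dist1_triangle {d : ℕ} (x y z : Zd d) : dist1 x z ≤ dist1 x y + dist1 y z := by
  simp only [dist1, ← sum_add_distrib]
  refine sum_le_sum fun i _ => ?_
  simpa using Int.natAbs_add_le (x i - y i) (y i - z i)

lemma dist1_add_left {d : ℕ} (x v : Zd d) : dist1 x (x + v) = dist1 0 v := by
  simp [dist1]

lemma adj_eq {d : ℕ} (x y : Zd d) : adj x y = if dist1 x y = 1 then 1 else 0 := rfl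

lemma dist1_eq_one_of_adj_ne_zero {d : ℕ} {x y : Zd d} (h : adj x y ≠ 0) : dist1 x y = 1 := by
  by_contra hxy
  simp [adj_eq, hxy] at h

lemma adj_nonneg {d : ℕ} (x y : Zd d) : 0 ≤ adj x y := by
  rw [adj_eq]; split_ifs <;> norm_num

lemma adj_le_one {d : ℕ} (x y : Zd d) : adj x y ≤ 1 := by
  rw [adj_eq]; split_ifs <;> norm_num

def nbhd {d : ℕ} (x : Zd d) : Finset (Zd d) :=
  (univ ×ˢ {1, -1}).image fun p : Fin d × ℤ => x + Pi.single p.1 p.2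

lemma card_nbhd_le {d : ℕ} (x : Zd d) : #(nbhd x) ≤ 2 * d := by
  refine card_image_le.trans ?_
  rw [card_product, card_univ, Fintype.card_fin, mul_comm]
  exact Nat.mul_le_mul_right d (card_le_two)

lemma Finset.exists_eq_one_of_sum_eq_one {ι : Type*} [DecidableEq ι] {s : Finset ι} {f : ι → ℕ}
    (h : ∑ i ∈ s, f i = 1) : ∃ i ∈ s, f i = 1 ∧ ∀ j ∈ s, j ≠ i → f j = 0 := by
  obtain ⟨i, hi, hfi⟩ := exists_ne_zero_of_sum_ne_zero (h ▸ one_ne_zero)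
  have hsplit := add_sum_erase s f hi
  have hrest : ∑ j ∈ s.erase i, f j = 0 := by omega
  refine ⟨i, hi, by omega, fun j hj hji => ?_⟩
  exact sum_eq_zero_iff.mp hrest j (mem_erase.mpr ⟨hji, hj⟩)

lemma mem_nbhd_of_dist1_eq_one {d : ℕ} {x y : Zd d} (h : dist1 x y = 1) : y ∈ nbhd x := by
  obtain ⟨i, -, hi, hothers⟩ := Finset.exists_eq_one_of_sum_eq_one h
  refine mem_image.mpr ⟨(i, y i - x i), mem_product.mpr ⟨mem_univ i, ?_⟩, ?_⟩
  · rcases Int.natAbs_eq_iff.mp hi with hi | hi <;> simp only [mem_insert, mem_singleton] <;> omega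
  · funext j
    rcases eq_or_ne j i with rfl | hji
    · simp
    · have := hothers j (mem_univ j) hji
      simp only [Pi.add_apply, Pi.single_eq_of_ne hji, add_zero]
      omega

lemma adj_eq_zero_of_notMem_nbhd {d : ℕ} {x y : Zd d} (h : y ∉ nbhd x) : adj x y = 0 := by
  by_contra hxy
  exact h (mem_nbhd_of_dist1_eq_one (dist1_eq_one_of_adj_ne_zero hxy))

section GeometricWeights

variable {t : ℝ}

lemma summable_pow_natAbs (h0 : 0 ≤ t) (h1 : t < 1) : Summable fun a : ℤ => t ^ a.natAbs :=
  .of_nat_of_neg (by simpa using summable_geometric_of_lt_one h0 h1)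
    (by simpa using summable_geometric_of_lt_one h0 h1)

lemma summable_pow_dist1_zero (h0 : 0 ≤ t) (h1 : t < 1) :
    ∀ d : ℕ, Summable fun y : Zd d => t ^ dist1 0 y
  | 0 => .of_finite
  | d + 1 => by
    rw [← (Fin.consEquiv fun _ : Fin (d + 1) => ℤ).summable_iff]
    refine ((summable_pow_natAbs h0 h1).mul_of_nonneg (summable_pow_dist1_zero h0 h1 d)
      (fun _ => by positivity) (fun _ => by positivity)).congr fun p => ?_
    simp [dist1, Fin.sum_univ_succ, pow_add]

lemma summable_pow_dist1 {d : ℕ} (h0 : 0 ≤ t) (h1 : t < 1) (x : Zd d) :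
    Summable fun y : Zd d => t ^ dist1 x y := by
  rw [← (Equiv.addLeft x).summable_iff]
  simpa [Function.comp_def, dist1_add_left] using summable_pow_dist1_zero h0 h1 d

lemma tsum_pow_dist1 {d : ℕ} (x : Zd d) :
    ∑' y : Zd d, t ^ dist1 x y = ∑' y : Zd d, t ^ dist1 0 y := by
  rw [← (Equiv.addLeft x).tsum_eq]
  simp [dist1_add_left]

lemma one_le_tsum_pow_dist1 {d : ℕ} (h0 : 0 ≤ t) (h1 : t < 1) :
    1 ≤ ∑' y : Zd d, t ^ dist1 0 y := by
  simpa [dist1_self] using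
    (summable_pow_dist1_zero h0 h1 d).le_tsum 0 fun _ _ => pow_nonneg h0 _

end GeometricWeights

section Resolvent

variable {d : ℕ}

lemma adjPow_succ_eq_sum (n : ℕ) (x y : Zd d) :
    adjPow d (n + 1) x y = ∑ z ∈ nbhd x, adj x z * adjPow d n z y :=
  tsum_eq_sum fun _ hz => by rw [adj_eq_zero_of_notMem_nbhd hz, zero_mul]

lemma adjPow_nonneg : ∀ (n : ℕ) (x y : Zd d), 0 ≤ adjPow d n x y
  | 0, x, y => by simp only [adjPow]; split_ifs <;> norm_num
  | n + 1, x, y => by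
    rw [adjPow_succ_eq_sum]
    exact sum_nonneg fun z _ => mul_nonneg (adj_nonneg x z) (adjPow_nonneg n z y)

lemma adjPow_le_pow : ∀ (n : ℕ) (x y : Zd d), adjPow d n x y ≤ (2 * d : ℝ) ^ n
  | 0, x, y => by simp only [adjPow, pow_zero]; split_ifs <;> norm_num
  | n + 1, x, y => by
    rw [adjPow_succ_eq_sum, pow_succ']
    refine (sum_le_card_nsmul _ _ ((2 * d : ℝ) ^ n) fun z _ => ?_).trans ?_
    · simpa using mul_le_mul (adj_le_one x z) (adjPow_le_pow n z y) (adjPow_nonneg n z y)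
        zero_le_one
    · rw [nsmul_eq_mul]
      gcongr
      exact_mod_cast card_nbhd_le x

lemma adjPow_eq_zero_of_lt_dist1 : ∀ (n : ℕ) {x y : Zd d}, n < dist1 x y → adjPow d n x y = 0
  | 0, x, y, h => if_neg fun hxy => by simp [hxy, dist1_self] at h
  | n + 1, x, y, h => by
    rw [adjPow_succ_eq_sum]
    refine sum_eq_zero fun z _ => ?_
    by_cases hxz : adj x z = 0
    · rw [hxz, zero_mul]
    · have := dist1_triangle x z y
      rw [dist1_eq_one_of_adj_ne_zero hxz] at this
      rw [adjPow_eq_zero_of_lt_dist1 n (by omega), mul_zero]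

variable {l r : ℝ}

lemma res_term_le (hl : 0 ≤ l) (hr : 2 * d * l ≤ r) (n : ℕ) (x y : Zd d) :
    l ^ n * adjPow d n x y ≤ r ^ n :=
  calc l ^ n * adjPow d n x y ≤ l ^ n * (2 * d) ^ n := by gcongr; exact adjPow_le_pow n x y
    _ = (2 * d * l) ^ n := by ring
    _ ≤ r ^ n := by gcongr

lemma res_le (hl : 0 ≤ l) (hr : 2 * d * l ≤ r) (hr1 : r < 1) (x y : Zd d) :
    res d l x y ≤ (1 - r)⁻¹ * r ^ dist1 x y := by
  have hr0 : 0 ≤ r := le_trans (by positivity) hr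
  set D := dist1 x y
  set a : ℕ → ℝ := fun n => l ^ n * adjPow d n x y
  have ha : Summable a := .of_nonneg_of_le (fun n => by positivity [adjPow_nonneg n x y])
    (res_term_le hl hr · x y) (summable_geometric_of_lt_one hr0 hr1)
  have hhead : ∑ n ∈ range D, a n = 0 :=
    sum_eq_zero fun n hn => by simp [a, adjPow_eq_zero_of_lt_dist1 n (mem_range.mp hn)]
  calc res d l x y = ∑' n, a (n + D) := by
        rw [res, ← ha.sum_add_tsum_nat_add D, hhead, zero_add]
    _ ≤ ∑' n, r ^ D * r ^ n :=
        (ha.comp_injective (add_left_injective D)).tsum_le_tsum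
          (fun n => by rw [← pow_add, add_comm D n]; exact res_term_le hl hr (n + D) x y)
          ((summable_geometric_of_lt_one hr0 hr1).mul_left _)
    _ = (1 - r)⁻¹ * r ^ D := by rw [tsum_mul_left, tsum_geometric_of_lt_one hr0 hr1, mul_comm]

lemma res_nonneg (hl : 0 ≤ l) (x y : Zd d) : 0 ≤ res d l x y :=
  tsum_nonneg fun n => mul_nonneg (pow_nonneg hl n) (adjPow_nonneg n x y)

end Resolvent

def ExpDecay {d : ℕ} (K : Zd d → Zd d → ℝ) : Prop :=
  ∃ C > 0, ∃ ρ ∈ Set.Ioo (0 : ℝ) 1, ∀ x y, |K x y| ≤ C * ρ ^ dist1 x y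

section ExpDecay

variable {d : ℕ}

lemma expDecay_res {l : ℝ} (hl : 0 ≤ l) (h : 2 * d * l < 1) : ExpDecay (res d l) := by
  set r := (1 + 2 * d * l) / 2 with hr
  have hr0 : 0 < r := by positivity
  have hr1 : r < 1 := by linarith
  refine ⟨(1 - r)⁻¹, inv_pos.mpr (by linarith), r, ⟨hr0, hr1⟩, fun x y => ?_⟩
  rw [abs_of_nonneg (res_nonneg hl x y)]
  exact res_le hl (by linarith) hr1 x y

lemma expDecay_id_sub_smul_adj (lam : ℝ) :
    ExpDecay fun x y : Zd d => (if x = y then 1 else 0) - lam * adj x y := by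
  refine ⟨2 * (1 + |lam|), by positivity, 1 / 2, ⟨by norm_num, by norm_num⟩, fun x y => ?_⟩
  by_cases hxy : x = y
  · subst hxy
    simp only [adj_eq, dist1_self, if_true, zero_ne_one, if_false, mul_zero, sub_zero, abs_one,
      pow_zero, mul_one]
    linarith [abs_nonneg lam]
  by_cases h1 : dist1 x y = 1
  · simp only [adj_eq, hxy, h1, if_true, if_false, mul_one, zero_sub, abs_neg, pow_one]
    linarith
  · simp only [adj_eq, hxy, h1, if_false, mul_zero, sub_self, abs_zero]
    positivity

lemma sq_pow_mul_sq_pow_le {σ : ℝ} (h0 : 0 ≤ σ) (h1 : σ ≤ 1) {a b c : ℕ} (hc : c ≤ a + b) :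
    (σ ^ 2) ^ a * (σ ^ 2) ^ b ≤ σ ^ c * σ ^ a := by
  rw [← pow_add, ← pow_mul, two_mul, pow_add]
  exact mul_le_mul (pow_le_pow_of_le_one h0 h1 hc) (pow_le_pow_of_le_one h0 h1 (by omega))
    (by positivity) (by positivity)

lemma ExpDecay.comp {K L : Zd d → Zd d → ℝ} (hK : ExpDecay K) (hL : ExpDecay L) :
    ExpDecay fun x y => ∑' w, K x w * L w y := by
  obtain ⟨C₁, hC₁, ρ₁, ⟨hρ₁0, hρ₁1⟩, hK⟩ := hK
  obtain ⟨C₂, hC₂, ρ₂, ⟨hρ₂0, hρ₂1⟩, hL⟩ := hL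
  set σ := √(max ρ₁ ρ₂)
  have hσ0 : 0 < σ := Real.sqrt_pos.mpr (lt_max_of_lt_left hρ₁0)
  have hσ1 : σ < 1 := (Real.sqrt_lt' one_pos).mpr (by simpa using max_lt hρ₁1 hρ₂1)
  have hσ2 : σ ^ 2 = max ρ₁ ρ₂ := Real.sq_sqrt (le_max_of_le_left hρ₁0.le)
  set S := ∑' w : Zd d, σ ^ dist1 0 w
  have hbound : ∀ x y w, |K x w * L w y| ≤ C₁ * C₂ * σ ^ dist1 x y * σ ^ dist1 x w := by
    intro x y w
    calc |K x w * L w y| ≤ C₁ * ρ₁ ^ dist1 x w * (C₂ * ρ₂ ^ dist1 w y) := by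
          rw [abs_mul]; exact mul_le_mul (hK x w) (hL w y) (abs_nonneg _) (by positivity)
      _ ≤ C₁ * (σ ^ 2) ^ dist1 x w * (C₂ * (σ ^ 2) ^ dist1 w y) := by
          rw [hσ2]; gcongr <;> simp
      _ ≤ C₁ * C₂ * (σ ^ dist1 x y * σ ^ dist1 x w) := by
          have := sq_pow_mul_sq_pow_le hσ0.le hσ1.le (dist1_triangle x w y)
          calc _ = C₁ * C₂ * ((σ ^ 2) ^ dist1 x w * (σ ^ 2) ^ dist1 w y) := by ring
            _ ≤ _ := by gcongr
      _ = _ := by ring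
  have hS : 0 < S := one_pos.trans_le (one_le_tsum_pow_dist1 hσ0.le hσ1)
  refine ⟨C₁ * C₂ * S, by positivity, σ, ⟨hσ0, hσ1⟩, fun x y => ?_⟩
  have hsum : Summable fun w => C₁ * C₂ * σ ^ dist1 x y * σ ^ dist1 x w :=
    (summable_pow_dist1 hσ0.le hσ1 x).mul_left _
  have habs : Summable fun w => ‖K x w * L w y‖ :=
    .of_nonneg_of_le (fun _ => norm_nonneg _) (hbound x y) hsum
  calc |∑' w, K x w * L w y| ≤ ∑' w, ‖K x w * L w y‖ := norm_tsum_le_tsum_norm habs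
    _ ≤ ∑' w, C₁ * C₂ * σ ^ dist1 x y * σ ^ dist1 x w := habs.tsum_le_tsum (hbound x y) hsum
    _ = C₁ * C₂ * S * σ ^ dist1 x y := by rw [tsum_mul_left, tsum_pow_dist1]; ring

lemma ExpDecay.tsum_compl_le {K : Zd d → Zd d → ℝ} (hK : ExpDecay K) :
    ∃ C > 0, ∃ c > 0, ∀ (V0 : Finset (Zd d)) (x : Zd d),
      (∑' y, if y ∈ V0 then 0 else K x y) ≤
        C * Real.exp (-c * ⨅ y : {y : Zd d // y ∉ V0}, (dist1 x y.1 : ℝ)) := by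
  obtain ⟨C, hC, ρ, ⟨hρ0, hρ1⟩, hK⟩ := hK
  set u := √ρ
  have hu0 : 0 < u := Real.sqrt_pos.mpr hρ0
  have hu1 : u < 1 := (Real.sqrt_lt' one_pos).mpr (by simpa using hρ1)
  set S := ∑' y : Zd d, u ^ dist1 0 y
  have hS : 0 < S := one_pos.trans_le (one_le_tsum_pow_dist1 hu0.le hu1)
  refine ⟨C * S, by positivity, -Real.log u, neg_pos.mpr (Real.log_neg hu0 hu1),
    fun V0 x => ?_⟩
  set δ := ⨅ y : {y : Zd d // y ∉ V0}, (dist1 x y.1 : ℝ)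
  -- Half of the decay pays for the distance to the complement, the other half for summability.
  have hbound : ∀ y, |if y ∈ V0 then 0 else K x y| ≤
      C * Real.exp (Real.log u * δ) * u ^ dist1 x y := by
    intro y
    split_ifs with hy
    · simp only [abs_zero]; positivity
    have hδ : δ ≤ dist1 x y :=
      ciInf_le ⟨0, by rintro _ ⟨_, rfl⟩; positivity⟩ (⟨y, hy⟩ : {y : Zd d // y ∉ V0})
    have hexp : u ^ dist1 x y ≤ Real.exp (Real.log u * δ) := by
      rw [← Real.exp_log hu0, ← Real.exp_nat_mul, Real.exp_log hu0, mul_comm]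
      exact Real.exp_le_exp.mpr (mul_le_mul_of_nonpos_left hδ (Real.log_neg hu0 hu1).le)
    calc |K x y| ≤ C * (u ^ 2) ^ dist1 x y := by rw [Real.sq_sqrt hρ0.le]; exact hK x y
      _ = C * u ^ dist1 x y * u ^ dist1 x y := by ring
      _ ≤ C * Real.exp (Real.log u * δ) * u ^ dist1 x y := by gcongr
  have hsum : Summable fun y => C * Real.exp (Real.log u * δ) * u ^ dist1 x y :=
    (summable_pow_dist1 hu0.le hu1 x).mul_left _
  calc (∑' y, if y ∈ V0 then 0 else K x y)
      ≤ ∑' y, C * Real.exp (Real.log u * δ) * u ^ dist1 x y :=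
        (Summable.of_norm_bounded hsum hbound).tsum_le_tsum (fun y => (le_abs_self _).trans
          (hbound y)) hsum
    _ = C * S * Real.exp (-(-Real.log u) * δ) := by
        rw [tsum_mul_left, tsum_pow_dist1, neg_neg]; ring

end ExpDecay

theorem exponential_locality_general (d : ℕ) (lam a0 : ℝ)
    (h1 : 0 ≤ lam) (h3 : 0 < a0)
    (h4 : lam * (1 + a0) * (2 * d) < 1) :
    ∃ C : ℝ, 0 < C ∧ ∃ c : ℝ, 0 < c ∧
      ∀ V0 : Finset (Zd d), ∀ x ∈ V0,
        (∑' y : Zd d, if y ∈ V0 then 0 else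
            ∑' z : Zd d, ∑' w : Zd d,
              ((if x = z then 1 else 0) - lam * adj x z) *
                res d (lam * (1 + a0)) z w * res d lam w y) ≤
          C * Real.exp (-c * (⨅ y : {y : Zd d // y ∉ V0}, (dist1 x y.1 : ℝ))) := by
  have hμ : 2 * d * (lam * (1 + a0)) < 1 := by linarith
  have hlam : 2 * d * lam < 1 := by nlinarith [mul_nonneg (mul_nonneg h1 h3.le) d.cast_nonneg]
  have hkernel : ExpDecay fun x y : Zd d => ∑' z, ∑' w,
      ((if x = z then 1 else 0) - lam * adj x z) * res d (lam * (1 + a0)) z w * res d lam w y := by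
    simpa only [mul_assoc, tsum_mul_left] using (expDecay_id_sub_smul_adj lam).comp
      ((expDecay_res (by positivity) hμ).comp (expDecay_res h1 hlam))
  obtain ⟨C, hC, c, hc, hbound⟩ := hkernel.tsum_compl_le
  exact ⟨C, hC, c, hc, fun V0 x _ => hbound V0 x⟩

/-- Exponential locality: the row sums over `y ∉ V₀` of the matrix
`(I-λ∂)(I-λ(1+a₀)∂)⁻¹(I-λ∂)⁻¹` are bounded by `C e^{-c·dist(x, ℤ^d∖V₀)}`,
uniformly in the finite set `V₀` and `x ∈ V₀`. -/
theorem exponential_locality (d : ℕ) (hd : 0 < d) (lam a0 : ℝ)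
    (h1 : 0 ≤ lam) (h2 : lam < 1 / (2 * d)) (h3 : 0 < a0)
    (h4 : lam * (1 + a0) * (2 * d) < 1) :
    ∃ C : ℝ, 0 < C ∧ ∃ c : ℝ, 0 < c ∧
      ∀ V0 : Finset (Zd d), ∀ x ∈ V0,
        (∑' y : Zd d, if y ∈ V0 then 0 else
            ∑' z : Zd d, ∑' w : Zd d,
              ((if x = z then 1 else 0) - lam * adj x z) *
                res d (lam * (1 + a0)) z w * res d lam w y) ≤
          C * Real.exp (-c * (⨅ y : {y : Zd d // y ∉ V0}, (dist1 x y.1 : ℝ))) :=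
  exponential_locality_general d lam a0 h1 h3 h4
end
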